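/- Under the standing hypotheses, every a ∈ S has a unique decomposition a = Σ_{y∈𝒢₀} α_{τ_y}(a_{x,y}) with a_{x,y} ∈ S_x for each y ∈ 𝒢₀. With this notation, a ∈ S^{α_𝒢} if and only if α_{τ(g)}(a_{x,s(g)}·1_{τ(g)⁻¹}) = a_{x,t(g)}·1_{τ(g)} for all g ∈ 𝒢. -/

import Mathlib

open CategoryTheory

namespace PaperGalois

/-- A unital partial action of a groupoid (with object/morphism data given by a
`CategoryTheory.Groupoid` structure on `Obj`) on a commutative ring `S`.
For a morphism `g : a ⟶ b` (source `a`, target `b`), `e g` is the central idempotent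
with `S_g = S • e g`, and `act g s` encodes `α_g(s · 1_{g⁻¹})`. -/
structure UPA (Obj : Type*) [Groupoid Obj] (S : Type*) [CommRing S] where
  e : ∀ ⦃a b : Obj⦄, (a ⟶ b) → S
  act : ∀ ⦃a b : Obj⦄, (a ⟶ b) → S → S
  idem : ∀ ⦃a b : Obj⦄ (g : a ⟶ b), e g * e g = e g
  e_le : ∀ ⦃a b : Obj⦄ (g : a ⟶ b), e g * e (𝟙 b) = e g
  act_proj : ∀ ⦃a b : Obj⦄ (g : a ⟶ b) (s : S), act g (s * e (Groupoid.inv g)) = act g s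
  act_mem : ∀ ⦃a b : Obj⦄ (g : a ⟶ b) (s : S), act g s * e g = act g s
  act_add : ∀ ⦃a b : Obj⦄ (g : a ⟶ b) (s t : S), act g (s + t) = act g s + act g t
  act_mul : ∀ ⦃a b : Obj⦄ (g : a ⟶ b) (s t : S), act g (s * t) = act g s * act g t
  act_unit : ∀ ⦃a b : Obj⦄ (g : a ⟶ b), act g (e (Groupoid.inv g)) = e g
  act_id : ∀ (a : Obj) (s : S), act (𝟙 a) s = s * e (𝟙 a)
  act_inv : ∀ ⦃a b : Obj⦄ (g : a ⟶ b) (s : S),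
      act (Groupoid.inv g) (act g s) = s * e (Groupoid.inv g)
  act_comp : ∀ ⦃a b c : Obj⦄ (h : a ⟶ b) (g : b ⟶ c) (s : S),
      act g (act h s) = act (h ≫ g) s * e g

namespace UPA

variable {Obj : Type*} [Groupoid Obj] {S : Type*} [CommRing S] (α : UPA Obj S)

lemma act_zero ⦃a b : Obj⦄ (g : a ⟶ b) : α.act g 0 = 0 := by
  have h := α.act_add g 0 0
  rw [add_zero] at h
  exact (left_eq_add.mp h)

lemma act_neg ⦃a b : Obj⦄ (g : a ⟶ b) (s : S) : α.act g (-s) = -(α.act g s) := by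
  have h := α.act_add g s (-s)
  rw [add_neg_cancel, α.act_zero] at h
  exact (eq_neg_of_add_eq_zero_right h.symm)

lemma act_one ⦃a b : Obj⦄ (g : a ⟶ b) : α.act g 1 = α.e g := by
  have h := α.act_proj g 1
  rw [one_mul, α.act_unit] at h
  exact h.symm

lemma act_e_src ⦃a b : Obj⦄ (g : a ⟶ b) : α.act g (α.e (𝟙 a)) = α.e g := by
  have h1 : α.e (𝟙 a) * α.e (Groupoid.inv g) = α.e (Groupoid.inv g) := by
    rw [mul_comm]; exact α.e_le (Groupoid.inv g)
  have h2 := α.act_proj g (α.e (𝟙 a))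
  rw [h1, α.act_unit] at h2
  exact h2.symm

/-- The set of `α`-invariant elements of `S` relative to a subgroupoid `H`:
`S^{α_H} = {s ∈ S : α_h(s·1_{h⁻¹}) = s·1_h for all h ∈ H}`. -/
def invSet (H : Subgroupoid Obj) : Set S :=
  {s : S | ∀ ⦃a b : Obj⦄ (h : a ⟶ b), h ∈ H.arrows a b → α.act h s = s * α.e h}

/-- The invariants `S_y^{α_A}` of the corner ring `S_y = S·1_y` under a set `A`
of loops at `y`. -/
def grpInvSet (y : Obj) (A : Set (y ⟶ y)) : Set S :=
  {s : S | s * α.e (𝟙 y) = s ∧ ∀ g ∈ A, α.act g s = s * α.e g}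

/-- The arrows `a ⟶ b` of the groupoid acting trivially on the subset `T ⊆ S`;
for `T` a subring this gives `𝒢_T`. -/
def fixingSet (T : Set S) (a b : Obj) : Set (a ⟶ b) :=
  {g : a ⟶ b | ∀ t ∈ T, α.act g t = t * α.e g}

/-- `⊕_{y ∈ Z} S_y`, the part of `S` supported on a set `Z` of objects. -/
def partSet (Z : Set Obj) : Set S :=
  {s : S | ∀ y : Obj, y ∉ Z → s * α.e (𝟙 y) = 0}

/-- `T·1_y ⊆ S_y` for a subset `T ⊆ S`. -/
def cornerSet (T : Set S) (y : Obj) : Set S :=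
  (fun t => t * α.e (𝟙 y)) '' T

/-- `T' ⊆ S_y` is `α_{𝒢(y,z)}`-strong. -/
def strongAt (T' : Set S) (a b : Obj) : Prop :=
  ∀ g h : a ⟶ b, (h ≫ Groupoid.inv g) ∉ α.fixingSet T' a a →
    ∀ f : S, f * f = f → f ≠ 0 → (f * α.e g = f ∨ f * α.e h = f) →
      ∃ t ∈ T', α.act g t * f ≠ α.act h t * f

/-- `T ⊆ S` is `α`-strong. -/
def IsStrong (T : Set S) : Prop :=
  ∀ a b : Obj, α.strongAt (α.cornerSet T a) a b

/-- Existence of a partial Galois coordinate system for the restriction of `α` to the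
subgroupoid `H` acting on `S_H ⊆ S` (for `H = ⊤`, `Sub = univ` this says that
`S^{α_𝒢} ⊆ S` is an `α_𝒢`-partial Galois extension). -/
def IsGaloisCoordSystem (H : Subgroupoid Obj) (Sub : Set S) : Prop :=
  ∃ (m : ℕ) (av bv : Fin m → S),
    (∀ i, av i ∈ Sub) ∧ (∀ i, bv i ∈ Sub) ∧
    (∀ ⦃a b : Obj⦄ (g : a ⟶ b), g ∈ H.arrows a b → a ≠ b →
        ∑ i, av i * α.act g (bv i) = 0) ∧
    (∀ (a : Obj) (g : a ⟶ a), g ∈ H.arrows a a → g ≠ 𝟙 a →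
        ∑ i, av i * α.act g (bv i) = 0) ∧
    (∀ a : Obj, a ∈ H.objs → ∑ i, av i * α.act (𝟙 a) (bv i) = α.e (𝟙 a))

/-- Group-type condition for the restriction of `α` to `H`, at the base object `u`:
there is a transversal (inside `H`) from `u` to every object of the `H`-component of `u`
whose ideals are as large as possible. -/
def IsGroupTypeAt (H : Subgroupoid Obj) (u : Obj) : Prop :=
  ∃ σ : ∀ v : Obj, (H.arrows u v).Nonempty → (u ⟶ v),
    (∀ v hv, σ v hv ∈ H.arrows u v) ∧
    (∀ h, σ u h = 𝟙 u) ∧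
    (∀ v hv, α.e (Groupoid.inv (σ v hv)) = α.e (𝟙 u) ∧ α.e (σ v hv) = α.e (𝟙 v))

/-- The restriction `α_H` of `α` to the subgroupoid `H` is of group-type. -/
def IsGroupType (H : Subgroupoid Obj) : Prop :=
  ∀ u ∈ H.objs, α.IsGroupTypeAt H u

end UPA

structure SubCorner (S : Type*) [CommRing S] where
  carrier : Set S
  unit : S
  unit_mem : unit ∈ carrier
  mul_unit : ∀ s ∈ carrier, s * unit = s
  add_mem : ∀ ⦃s t : S⦄, s ∈ carrier → t ∈ carrier → s + t ∈ carrier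
  mul_mem : ∀ ⦃s t : S⦄, s ∈ carrier → t ∈ carrier → s * t ∈ carrier
  neg_mem : ∀ ⦃s : S⦄, s ∈ carrier → -s ∈ carrier
  zero_mem : (0 : S) ∈ carrier

namespace SubCorner

variable {S : Type*} [CommRing S]

lemma nsmul_mem (P : SubCorner S) (n : ℕ) {s : S} (hs : s ∈ P.carrier) :
    n • s ∈ P.carrier := by
  induction n with
  | zero => simpa using P.zero_mem
  | succ n ih => rw [succ_nsmul]; exact P.add_mem ih hs

lemma zsmul_mem (P : SubCorner S) (n : ℤ) {s : S} (hs : s ∈ P.carrier) :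
    n • s ∈ P.carrier := by
  cases n with
  | ofNat n => simpa [natCast_zsmul] using P.nsmul_mem n hs
  | negSucc n => rw [negSucc_zsmul]; exact P.neg_mem (P.nsmul_mem (n+1) hs)

instance (P : SubCorner S) : CommRing ↥P.carrier where
  add a b := ⟨a.1 + b.1, P.add_mem a.2 b.2⟩
  mul a b := ⟨a.1 * b.1, P.mul_mem a.2 b.2⟩
  neg a := ⟨-a.1, P.neg_mem a.2⟩
  zero := ⟨0, P.zero_mem⟩
  one := ⟨P.unit, P.unit_mem⟩
  add_assoc a b c := Subtype.ext (add_assoc _ _ _)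
  zero_add a := Subtype.ext (zero_add _)
  add_zero a := Subtype.ext (add_zero _)
  add_comm a b := Subtype.ext (add_comm _ _)
  mul_assoc a b c := Subtype.ext (mul_assoc _ _ _)
  one_mul a := Subtype.ext (by
    show P.unit * a.1 = a.1
    rw [mul_comm]; exact P.mul_unit a.1 a.2)
  mul_one a := Subtype.ext (P.mul_unit a.1 a.2)
  left_distrib a b c := Subtype.ext (left_distrib _ _ _)
  right_distrib a b c := Subtype.ext (right_distrib _ _ _)
  mul_comm a b := Subtype.ext (mul_comm _ _)
  zero_mul a := Subtype.ext (zero_mul _)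
  mul_zero a := Subtype.ext (mul_zero _)
  neg_add_cancel a := Subtype.ext (neg_add_cancel _)
  nsmul n a := ⟨n • a.1, P.nsmul_mem n a.2⟩
  nsmul_zero a := Subtype.ext (zero_nsmul _)
  nsmul_succ n a := Subtype.ext (succ_nsmul _ _)
  zsmul n a := ⟨n • a.1, P.zsmul_mem n a.2⟩
  zsmul_zero' a := Subtype.ext (zero_zsmul _)
  zsmul_succ' n a := Subtype.ext (by
    show ((n.succ : ℤ)) • a.1 = (n : ℤ) • a.1 + a.1
    rw [Int.natCast_succ, add_zsmul, one_zsmul])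
  zsmul_neg' n a := Subtype.ext (by
    show (Int.negSucc n) • a.1 = -(((n.succ : ℤ)) • a.1)
    rw [negSucc_zsmul]
    norm_cast)

def incl {P Q : SubCorner S} (hle : P.carrier ⊆ Q.carrier) (hu : P.unit = Q.unit) :
    ↥P.carrier →+* ↥Q.carrier where
  toFun a := ⟨a.1, hle a.2⟩
  map_one' := Subtype.ext hu
  map_mul' _ _ := rfl
  map_zero' := rfl
  map_add' _ _ := rfl

def IsSepExt (P Q : SubCorner S) (hle : P.carrier ⊆ Q.carrier) (hu : P.unit = Q.unit) : Prop :=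
  letI : Algebra ↥P.carrier ↥Q.carrier := (incl hle hu).toAlgebra
  ∃ ε : TensorProduct ↥P.carrier ↥Q.carrier ↥Q.carrier,
    (∀ t : ↥Q.carrier,
        (TensorProduct.tmul ↥P.carrier t (1 : ↥Q.carrier)) * ε
          = ε * (TensorProduct.tmul ↥P.carrier (1 : ↥Q.carrier) t)) ∧
    LinearMap.mul' ↥P.carrier ↥Q.carrier ε = 1

end SubCorner

/-- A `Subring` of `S`, seen as a corner subring with identity `1`. -/
def Subring.toSC {S : Type*} [CommRing S] (T : Subring S) : SubCorner S where
  carrier := (T : Set S)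
  unit := 1
  unit_mem := T.one_mem
  mul_unit := fun s _ => mul_one s
  add_mem := fun _ _ hs ht => T.add_mem hs ht
  mul_mem := fun _ _ hs ht => T.mul_mem hs ht
  neg_mem := fun _ hs => T.neg_mem hs
  zero_mem := T.zero_mem

namespace UPA

variable {Obj : Type*} [Groupoid Obj] {S : Type*} [CommRing S] (α : UPA Obj S)

lemma invSet_one_mem (H : Subgroupoid Obj) : (1 : S) ∈ α.invSet H :=
  fun _ _ h _ => by rw [α.act_one h, one_mul]

lemma invSet_zero_mem (H : Subgroupoid Obj) : (0 : S) ∈ α.invSet H :=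
  fun _ _ h _ => by rw [α.act_zero h, zero_mul]

lemma invSet_add_mem (H : Subgroupoid Obj) {s t : S} (hs : s ∈ α.invSet H)
    (ht : t ∈ α.invSet H) : s + t ∈ α.invSet H :=
  fun _ _ h hH => by rw [α.act_add h, hs h hH, ht h hH, add_mul]

lemma invSet_mul_mem (H : Subgroupoid Obj) {s t : S} (hs : s ∈ α.invSet H)
    (ht : t ∈ α.invSet H) : s * t ∈ α.invSet H :=
  fun _ _ h hH => by
    rw [α.act_mul h, hs h hH, ht h hH, mul_mul_mul_comm, α.idem h]

lemma invSet_neg_mem (H : Subgroupoid Obj) {s : S} (hs : s ∈ α.invSet H) :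
    -s ∈ α.invSet H :=
  fun _ _ h hH => by rw [α.act_neg h, hs h hH, neg_mul]

/-- The subring of invariants `S^{α_H}` of `S`, a genuine unital subring of `S`. -/
def invariantsSubring (H : Subgroupoid Obj) : Subring S where
  carrier := α.invSet H
  one_mem' := α.invSet_one_mem H
  zero_mem' := α.invSet_zero_mem H
  add_mem' := α.invSet_add_mem H
  mul_mem' := α.invSet_mul_mem H
  neg_mem' := α.invSet_neg_mem H

/-- `S^{α_H}` as a corner subring of `S` (with identity `1`). -/
def invariantsSC (H : Subgroupoid Obj) : SubCorner S where
  carrier := α.invSet H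
  unit := 1
  unit_mem := α.invSet_one_mem H
  mul_unit := fun s _ => mul_one s
  add_mem := fun _ _ hs ht => α.invSet_add_mem H hs ht
  mul_mem := fun _ _ hs ht => α.invSet_mul_mem H hs ht
  neg_mem := fun _ hs => α.invSet_neg_mem H hs
  zero_mem := α.invSet_zero_mem H

lemma grpInvSet_unit_mem (y : Obj) (A : Set (y ⟶ y)) :
    α.e (𝟙 y) ∈ α.grpInvSet y A := by
  refine ⟨α.idem (𝟙 y), fun g _ => ?_⟩
  rw [α.act_e_src g]
  have : α.e (𝟙 y) * α.e g = α.e g := by rw [mul_comm]; exact α.e_le g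
  rw [this]

/-- `S_y^{α_A}` as a corner subring of `S` (with identity `1_y`). -/
def grpInvSC (y : Obj) (A : Set (y ⟶ y)) : SubCorner S where
  carrier := α.grpInvSet y A
  unit := α.e (𝟙 y)
  unit_mem := α.grpInvSet_unit_mem y A
  mul_unit := fun _ hs => hs.1
  add_mem := fun s t hs ht =>
    ⟨by rw [add_mul, hs.1, ht.1], fun g hg => by
      rw [α.act_add g, hs.2 g hg, ht.2 g hg, add_mul]⟩
  mul_mem := fun s t hs ht =>
    ⟨by rw [mul_assoc, ht.1], fun g hg => by
      rw [α.act_mul g, hs.2 g hg, ht.2 g hg, mul_mul_mul_comm, α.idem g]⟩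
  neg_mem := fun s hs =>
    ⟨by rw [neg_mul, hs.1], fun g hg => by rw [α.act_neg g, hs.2 g hg, neg_mul]⟩
  zero_mem := ⟨zero_mul _, fun g _ => by rw [α.act_zero g, zero_mul]⟩

lemma invSet_le (H : Subgroupoid Obj) :
    α.invSet (Subgroupoid.full (Set.univ : Set Obj)) ⊆ α.invSet H :=
  fun _ hs _ _ h _ => hs h ⟨trivial, trivial⟩

lemma invSet_le_subring {T : Subring S}
    (h : ∀ s ∈ α.invSet (Subgroupoid.full (Set.univ : Set Obj)), s ∈ T) :
    (α.invariantsSC (Subgroupoid.full (Set.univ : Set Obj))).carrier ⊆ (Subring.toSC T).carrier :=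
  h

lemma grpInvSet_le (y : Obj) (A : Set (y ⟶ y)) :
    α.grpInvSet y (Set.univ : Set (y ⟶ y)) ⊆ α.grpInvSet y A :=
  fun _ hs => ⟨hs.1, fun g _ => hs.2 g trivial⟩

end UPA

end PaperGalois

theorem CategoryTheory.Groupoid.inv_inv {C : Type*} [Groupoid C] {a b : C} (g : a ⟶ b) :
    Groupoid.inv (Groupoid.inv g) = g := by
  simp [Groupoid.inv_eq_inv]

/-!
The idempotents `1_y` are orthogonal with sum `1`, and `α_{τ_y}` maps `S_x` onto `S_y`, so the
decomposition is forced: `a_{x,y} = α_{τ_y⁻¹}(a·1_y)`. If `a` is invariant, every component is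
`a·1_x`, which is visibly compatible. Conversely, transporting the compatibility condition for
`τ(h)` along `τ_{t(h)}` turns it into `α_h(a·1_{h⁻¹}) = a·1_h`, because
`1_{τ_{t(h)} τ(h)} = 1_{h τ_{s(h)}} = 1_h` for a group-type transversal.
-/

namespace PaperGalois

namespace UPA

variable {Obj : Type*} [Groupoid Obj] {S : Type*} [CommRing S] (α : UPA Obj S)

lemma act_mul_e_id_target ⦃a b : Obj⦄ (g : a ⟶ b) (s : S) :
    α.act g s * α.e (𝟙 b) = α.act g s := by
  rw [← α.act_mem, mul_assoc, α.e_le]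

lemma act_mul_e_id_source ⦃a b : Obj⦄ (g : a ⟶ b) (s : S) :
    α.act g (s * α.e (𝟙 a)) = α.act g s := by
  rw [← α.act_proj g s, ← α.act_proj g (s * _), mul_assoc, mul_comm (α.e _), α.e_le]

lemma act_eq_zero_of_mul_e_id_eq_zero ⦃a b : Obj⦄ (g : a ⟶ b) {s : S}
    (hs : s * α.e (𝟙 a) = 0) : α.act g s = 0 := by
  rw [← α.act_mul_e_id_source, hs, α.act_zero]

lemma act_act_inv ⦃a b : Obj⦄ (g : a ⟶ b) (s : S) :
    α.act g (α.act (Groupoid.inv g) s) = s * α.e g := by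
  rw [α.act_comp, Groupoid.inv_comp, α.act_id, mul_assoc, mul_comm (α.e _), α.e_le]

lemma act_sum ⦃a b : Obj⦄ (g : a ⟶ b) {ι : Type*} (t : Finset ι) (f : ι → S) :
    α.act g (∑ i ∈ t, f i) = ∑ i ∈ t, α.act g (f i) :=
  map_sum (AddMonoidHom.mk' (α.act g) (α.act_add g)) f t

lemma act_e ⦃a b c : Obj⦄ (p : a ⟶ b) (g : b ⟶ c) :
    α.act g (α.e p) = α.e (p ≫ g) * α.e g := by
  rw [← α.act_e_src p, α.act_comp, α.act_e_src]

/-- `S_{g⁻¹} = S_a` and `S_g = S_b`: the group-type condition on a single arrow. -/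
def IsFull ⦃a b : Obj⦄ (g : a ⟶ b) : Prop :=
  α.e (Groupoid.inv g) = α.e (𝟙 a) ∧ α.e g = α.e (𝟙 b)

variable {α}

lemma IsFull.inv ⦃a b : Obj⦄ {g : a ⟶ b} (hg : α.IsFull g) : α.IsFull (Groupoid.inv g) := by
  rw [IsFull, Groupoid.inv_inv]
  exact hg.symm

lemma e_comp_mul_e_of_e_eq ⦃a b c : Obj⦄ {g : a ⟶ b} (hg : α.e g = α.e (𝟙 b)) (p : b ⟶ c) :
    α.e (g ≫ p) * α.e p = α.e p := by
  rw [← α.act_e, hg, α.act_e_src]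

lemma IsFull.e_comp ⦃a b c : Obj⦄ {g : a ⟶ b} (hg : α.IsFull g) (p : b ⟶ c) :
    α.e (g ≫ p) = α.e p := by
  have h := e_comp_mul_e_of_e_eq hg.inv.2 (g ≫ p)
  rw [← Category.assoc, Groupoid.inv_comp, Category.id_comp] at h
  rw [← h, mul_comm, e_comp_mul_e_of_e_eq hg.2]

lemma IsFull.act_e ⦃a b c : Obj⦄ {g : b ⟶ c} (hg : α.IsFull g) (p : a ⟶ b) :
    α.act g (α.e p) = α.e (p ≫ g) := by
  rw [α.act_e, hg.2, α.e_le]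

lemma act_mul_e_id_eq_zero (horth : ∀ y z : Obj, y ≠ z → α.e (𝟙 y) * α.e (𝟙 z) = 0)
    ⦃a b : Obj⦄ (g : a ⟶ b) (s : S) {z : Obj} (hbz : b ≠ z) : α.act g s * α.e (𝟙 z) = 0 := by
  rw [← α.act_mul_e_id_target, mul_assoc, horth b z hbz, mul_zero]

section Decomposition

variable {x : Obj} (τ : ∀ y : Obj, x ⟶ y)

variable (α) in
/-- The component `a_{x,y} ∈ S_x` of `a`. -/
def component (a : S) (y : Obj) : S :=
  α.act (Groupoid.inv (τ y)) a

/-- The loop `τ(g)` at `x`. -/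
def toLoop ⦃u v : Obj⦄ (g : u ⟶ v) : x ⟶ x :=
  τ u ≫ g ≫ Groupoid.inv (τ v)

variable (α) in
def ComponentsCompatible (c : Obj → S) : Prop :=
  ∀ ⦃u v : Obj⦄ (g : u ⟶ v), α.act (toLoop τ g) (c u) = c v * α.e (toLoop τ g)

lemma toLoop_comp ⦃u v : Obj⦄ (g : u ⟶ v) : toLoop τ g ≫ τ v = τ u ≫ g := by
  rw [toLoop, Category.assoc, Category.assoc, Groupoid.inv_comp, Category.comp_id]

variable {τ}

lemma component_mul_e_id (hτ : ∀ y, α.IsFull (τ y)) (a : S) (y : Obj) :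
    α.component τ a y * α.e (𝟙 x) = α.component τ a y := by
  rw [component, ← (hτ y).1, act_mem]

lemma act_component (hτ : ∀ y, α.IsFull (τ y)) (a : S) (y : Obj) :
    α.act (τ y) (α.component τ a y) = a * α.e (𝟙 y) := by
  rw [component, act_act_inv, (hτ y).2]

lemma component_of_mem_invSet (hτ : ∀ y, α.IsFull (τ y)) {a : S}
    (ha : a ∈ α.invSet (Subgroupoid.full (Set.univ : Set Obj))) (y : Obj) :
    α.component τ a y = a * α.e (𝟙 x) := by
  rw [component, ha _ ⟨trivial, trivial⟩, (hτ y).1]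

lemma componentsCompatible_of_mem_invSet (hτ : ∀ y, α.IsFull (τ y)) {a : S}
    (ha : a ∈ α.invSet (Subgroupoid.full (Set.univ : Set Obj))) :
    α.ComponentsCompatible τ (α.component τ a) := by
  intro u v g
  rw [component_of_mem_invSet hτ ha, component_of_mem_invSet hτ ha, act_mul_e_id_source,
    ha _ ⟨trivial, trivial⟩, mul_assoc, mul_comm (α.e _), e_le]

variable [Fintype Obj]

lemma sum_act_mul_e_id (horth : ∀ y z : Obj, y ≠ z → α.e (𝟙 y) * α.e (𝟙 z) = 0)
    (c : Obj → S) (z : Obj) :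
    (∑ y, α.act (τ y) (c y)) * α.e (𝟙 z) = α.act (τ z) (c z) := by
  rw [Finset.sum_mul, Finset.sum_eq_single z, act_mul_e_id_target]
  · exact fun y _ hyz => α.act_mul_e_id_eq_zero horth (τ y) (c y) hyz
  · simp

lemma act_sum_act (horth : ∀ y z : Obj, y ≠ z → α.e (𝟙 y) * α.e (𝟙 z) = 0)
    (c : Obj → S) ⦃u v : Obj⦄ (h : u ⟶ v) :
    α.act h (∑ y, α.act (τ y) (c y)) = α.act (τ u ≫ h) (c u) * α.e h := by
  rw [act_sum, Finset.sum_eq_single u, act_comp]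
  · exact fun y _ hyu =>
      α.act_eq_zero_of_mul_e_id_eq_zero h (α.act_mul_e_id_eq_zero horth (τ y) (c y) hyu)
  · simp

lemma sum_act_component (hsum : ∑ y : Obj, α.e (𝟙 y) = 1) (hτ : ∀ y, α.IsFull (τ y))
    (a : S) : ∑ y, α.act (τ y) (α.component τ a y) = a := by
  simp_rw [act_component hτ, ← Finset.mul_sum, hsum, mul_one]

lemma eq_component_of_eq_sum (horth : ∀ y z : Obj, y ≠ z → α.e (𝟙 y) * α.e (𝟙 z) = 0)
    (hτ : ∀ y, α.IsFull (τ y)) {c : Obj → S} (hc : ∀ y, c y * α.e (𝟙 x) = c y) {a : S}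
    (ha : a = ∑ y, α.act (τ y) (c y)) : c = α.component τ a := by
  funext z
  rw [component, ← α.act_mul_e_id_source (Groupoid.inv (τ z)), ha, sum_act_mul_e_id horth,
    act_inv, (hτ z).1, hc]

theorem existsUnique_decomposition (hsum : ∑ y : Obj, α.e (𝟙 y) = 1)
    (horth : ∀ y z : Obj, y ≠ z → α.e (𝟙 y) * α.e (𝟙 z) = 0) (hτ : ∀ y, α.IsFull (τ y))
    (a : S) :
    ∃! c : Obj → S, (∀ y, c y * α.e (𝟙 x) = c y) ∧ a = ∑ y, α.act (τ y) (c y) :=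
  ⟨α.component τ a, ⟨component_mul_e_id hτ a, (sum_act_component hsum hτ a).symm⟩,
    fun _ hc => eq_component_of_eq_sum horth hτ hc.1 hc.2⟩

lemma sum_act_mem_invSet (horth : ∀ y z : Obj, y ≠ z → α.e (𝟙 y) * α.e (𝟙 z) = 0)
    (hτ : ∀ y, α.IsFull (τ y)) {c : Obj → S} (hcompat : α.ComponentsCompatible τ c) :
    ∑ y, α.act (τ y) (c y) ∈ α.invSet (Subgroupoid.full (Set.univ : Set Obj)) := by
  intro u v h _
  have transported : α.act (τ v) (c v) * α.e h = α.act (τ u ≫ h) (c u) :=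
    calc α.act (τ v) (c v) * α.e h
        = α.act (τ v) (c v) * α.act (τ v) (α.e (toLoop τ h)) := by
          rw [(hτ v).act_e, toLoop_comp, (hτ u).e_comp]
      _ = α.act (τ v) (α.act (toLoop τ h) (c u)) := by rw [← act_mul, hcompat h]
      _ = α.act (τ u ≫ h) (c u) := by
          rw [act_comp, toLoop_comp, (hτ v).2, act_mul_e_id_target]
  calc α.act h (∑ y, α.act (τ y) (c y))
      = α.act (τ v) (c v) * α.e h * α.e h := by rw [act_sum_act horth, transported]
    _ = (∑ y, α.act (τ y) (c y)) * α.e (𝟙 v) * α.e h := by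
          rw [sum_act_mul_e_id horth, mul_assoc, idem]
    _ = (∑ y, α.act (τ y) (c y)) * α.e h := by rw [mul_assoc, mul_comm (α.e _), e_le]

end Decomposition

end UPA

/-- **Proposition 3.1.**  Standing hypotheses: `𝒢` a finite connected groupoid, `α` a unital
group-type partial action of `𝒢` on the commutative ring `S = ⊕_{y ∈ 𝒢₀} S_y`, and
`τ = (τ_y)_{y}` a transversal in `𝒢` for `x` with `S_{τ_y⁻¹} = S_x`, `S_{τ_y} = S_y`.
Every `a ∈ S` has a unique decomposition `a = Σ_{y ∈ 𝒢₀} α_{τ_y}(a_{x,y})` with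
`a_{x,y} ∈ S_x`, and for such a decomposition, `a ∈ S^{α_𝒢}` if and only if
`α_{τ(g)}(a_{x,s(g)}·1_{τ(g)⁻¹}) = a_{x,t(g)}·1_{τ(g)}` for all `g ∈ 𝒢`, where
`τ(g) = τ_{t(g)}⁻¹ g τ_{s(g)}`. -/
theorem invariant_iff_components_compatible
    {Obj : Type*} [Groupoid Obj] [Fintype Obj] [∀ a b : Obj, Finite (a ⟶ b)]
    {S : Type*} [CommRing S] (α : UPA Obj S)
    (hsum : ∑ y : Obj, α.e (𝟙 y) = 1)
    (horth : ∀ y z : Obj, y ≠ z → α.e (𝟙 y) * α.e (𝟙 z) = 0)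
    (hconn : ∀ a b : Obj, Nonempty (a ⟶ b))
    (x : Obj) (τ : ∀ y : Obj, x ⟶ y) (hτx : τ x = 𝟙 x)
    (hgt : ∀ y : Obj, α.e (Groupoid.inv (τ y)) = α.e (𝟙 x) ∧ α.e (τ y) = α.e (𝟙 y)) :
    ∀ a : S,
      (∃! c : Obj → S,
        (∀ y : Obj, c y * α.e (𝟙 x) = c y) ∧ a = ∑ y : Obj, α.act (τ y) (c y)) ∧
      (∀ c : Obj → S, (∀ y : Obj, c y * α.e (𝟙 x) = c y) →
        a = ∑ y : Obj, α.act (τ y) (c y) →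
        (a ∈ α.invSet (Subgroupoid.full (Set.univ : Set Obj)) ↔
          ∀ ⦃u v : Obj⦄ (g : u ⟶ v),
            α.act (τ u ≫ g ≫ Groupoid.inv (τ v)) (c u)
              = c v * α.e (τ u ≫ g ≫ Groupoid.inv (τ v)))) := by
  intro a
  refine ⟨α.existsUnique_decomposition hsum horth hgt a, fun c hc ha => ⟨fun hinv => ?_, ?_⟩⟩
  · obtain rfl := α.eq_component_of_eq_sum horth hgt hc ha
    exact α.componentsCompatible_of_mem_invSet hgt hinv
  · intro hcompat
    rw [ha]
    exact α.sum_act_mem_invSet horth hgt hcompat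

end PaperGalois
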